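/- In the graph formed by the hard-instance construction for best-effort algorithms with parameter k (central clique q_1,…,q_k, each q_i additionally adjacent to k−1 private pendant-star queries, all cardinality constraints equal to k), the only committable group containing q_{k} at the time q_k arrives (i.e., among q_1,…,q_k) is {q_1,…,q_k}, and after {q_1,…,q_k} is committed, no committable group exists among the remaining queries. -/
import Mathlib


/-- In the hard-instance construction with parameter `k` (central queries `(i,0)` with
selection set `{x, i}`, pendant queries `(i,j)`, `j ≠ 0`, with selection set `{i}`,
all cardinality constraints exactly `k`): the only committable group among the central
queries containing the last central query is the set of all central queries, and after
the central queries are committed (removed), no committable group exists among the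
remaining (pendant) queries. -/
theorem stmt_7 (k : ℕ) (hk : 2 ≤ k) :
    let z : Fin k := ⟨0, by omega⟩
    let sel : Fin k × Fin k → Finset (Option (Fin k)) :=
      fun q => if q.2 = z then {none, some q.1} else {some q.1}
    let committable : Finset (Fin k × Fin k) → Prop :=
      fun G => G.card = k ∧ ∃ a : Option (Fin k), ∀ q ∈ G, a ∈ sel q
    let centrals : Finset (Fin k × Fin k) := Finset.univ.image fun i : Fin k => (i, z)
    (∀ G ⊆ centrals, ((⟨k - 1, by omega⟩ : Fin k), z) ∈ G →
        committable G → G = centrals) ∧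
    (∀ G : Finset (Fin k × Fin k), (∀ q ∈ G, q.2 ≠ z) → ¬ committable G) := by
  intro z sel committable centrals
  have hcent : centrals.card = k := by
    rw [Finset.card_image_of_injective _ (fun a b h => by simpa using congrArg Prod.fst h)]
    simp
  constructor
  · intro G hsub _ hcom
    exact Finset.eq_of_subset_of_card_le hsub (by rw [hcom.1, hcent])
  · rintro G hne ⟨hcard, a, ha⟩
    -- all first coordinates equal
    have hfst : ∀ q ∈ G, a = some q.1 := by
      intro q hq
      have := ha q hq
      simp only [sel, if_neg (hne q hq)] at this
      simpa using this
    have hinj : Set.InjOn (Prod.snd : Fin k × Fin k → Fin k) ↑G := by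
      intro p hp q hq h
      have h1 : (p.1 : Fin k) = q.1 := by
        have := (hfst p hp).symm.trans (hfst q hq)
        simpa using this
      exact Prod.ext h1 h
    have himg : G.image Prod.snd ⊆ Finset.univ \ {z} := by
      intro b hb
      simp only [Finset.mem_image] at hb
      obtain ⟨q, hq, rfl⟩ := hb
      simp [hne q hq]
    have h1 : (G.image Prod.snd).card = k := by
      rw [Finset.card_image_of_injOn hinj, hcard]
    have h2 := Finset.card_le_card himg
    rw [h1] at h2
    simp [Finset.card_sdiff_of_subset (by simp : ({z} : Finset (Fin k)) ⊆ Finset.univ)] at h2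
    omega
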